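/- arXiv:0904.3841 — 3 statements merged into one kernel-verified Lean document; each statement's English description precedes it below -/
import Mathlib

section
/- Let G be a connected nilpotent Lie group and φ: ℝ → G a one-parameter subgroup (continuous homomorphism). If φ(t₀) lies in the center of G for some t₀ ≠ 0, then φ(t) is central for all t ∈ ℝ. -/
/-!
A group with `C¹` multiplication has no small subgroups: in a chart at `1` squaring has
derivative `2`, so it roughly doubles the distance to `1`, and some power of any nontrivial element
of a subgroup leaves a fixed neighbourhood of `1`.

Descend the upper central series `Z₀ ≤ Z₁ ≤ ⋯` of `G`. Membership in `Z_j` means that all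
`j`-fold iterated commutators vanish. If `φ(ℝ) ⊆ Z_{k+2}` and `c(t)` is a `k`-fold iterated
commutator of `φ t` with fixed elements, then for every `g` the map `t ↦ ⁅c(t), g⁆` is a
one-parameter subgroup of `G`. It is trivial at `t₀`, because `φ t₀` is central, and trivial for
`g = 1`. A one-parameter subgroup that is trivial at `t₀ ≠ 0` takes all its values on `[0, t₀]`.
By compactness, for `g` near a `g₀` where the map is trivial these values stay in a neighbourhood
without small subgroups, so the map is trivial. The set of such `g` is therefore clopen, and by
connectedness it is all of `G`. So `φ(ℝ) ⊆ Z_{k+1}`.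
-/

open scoped commutatorElement
open Filter Topology Set

section IterCommutator

variable {G : Type*} [Group G]

def iterCommutator : List G → G → G
  | [], x => x
  | g :: L, x => ⁅iterCommutator L x, g⁆

@[simp] theorem iterCommutator_nil (x : G) : iterCommutator [] x = x := rfl

@[simp] theorem iterCommutator_cons (g : G) (L : List G) (x : G) :
    iterCommutator (g :: L) x = ⁅iterCommutator L x, g⁆ := rfl

theorem iterCommutator_mem_upperCentralSeries {x : G} (L : List G) {j : ℕ}
    (hx : x ∈ Subgroup.upperCentralSeries G (L.length + j)) :
    iterCommutator L x ∈ Subgroup.upperCentralSeries G j := by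
  induction L generalizing j with
  | nil => simpa using hx
  | cons g L ih =>
    rw [List.length_cons, Nat.add_right_comm] at hx
    exact Subgroup.mem_upperCentralSeries_succ_iff.mp (ih hx) g

theorem mem_upperCentralSeries_of_forall_iterCommutator_append_eq_one {x : G} (L : List G)
    {j : ℕ} (h : ∀ M : List G, M.length = j → iterCommutator (M ++ L) x = 1) :
    iterCommutator L x ∈ Subgroup.upperCentralSeries G j := by
  induction j generalizing L with
  | zero => simpa using h [] rfl
  | succ j ih =>
    refine Subgroup.mem_upperCentralSeries_succ_iff.mpr fun g => ih (g :: L) fun M hM => ?_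
    simpa using h (M ++ [g]) (by simp [hM])

theorem mem_upperCentralSeries_iff_forall_iterCommutator_eq_one {x : G} {j : ℕ} :
    x ∈ Subgroup.upperCentralSeries G j ↔
      ∀ L : List G, L.length = j → iterCommutator L x = 1 := by
  refine ⟨fun hx L hL => ?_, fun h => ?_⟩
  · simpa using iterCommutator_mem_upperCentralSeries L (j := 0) (by simpa [hL] using hx)
  · simpa using mem_upperCentralSeries_of_forall_iterCommutator_append_eq_one [] (by simpa using h)

theorem mk'_mem_center_of_mem_upperCentralSeries_succ {j : ℕ} {x : G}
    (hx : x ∈ Subgroup.upperCentralSeries G (j + 1)) :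
    QuotientGroup.mk' (Subgroup.upperCentralSeries G j) x ∈
      Subgroup.center (G ⧸ Subgroup.upperCentralSeries G j) := by
  change x ∈ Subgroup.upperCentralSeriesStep (Subgroup.upperCentralSeries G j) at hx
  rwa [Subgroup.upperCentralSeriesStep_eq_comap_center] at hx

theorem commutatorElement_mul_mul_of_mem_center {a b z h : G} (hz : z ∈ Subgroup.center G)
    (hb : ⁅b, h⁆ ∈ Subgroup.center G) : ⁅a * b * z, h⁆ = ⁅a, h⁆ * ⁅b, h⁆ := by
  rw [Subgroup.mem_center_iff] at hz hb
  rw [commutatorElement_mul_left_eq_conj_mul (a * b),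
    commutatorElement_eq_one_iff_mul_comm.mpr (hz h).symm, mul_one, mul_inv_cancel, one_mul,
    commutatorElement_mul_left_eq_conj_mul, hb a, mul_inv_cancel_right, hb]

theorem exists_iterCommutator_mul (L : List G) {j : ℕ} (a : G) {b : G}
    (hb : b ∈ Subgroup.upperCentralSeries G (L.length + j + 1)) :
    ∃ z ∈ Subgroup.upperCentralSeries G j,
      iterCommutator L (a * b) = iterCommutator L a * iterCommutator L b * z := by
  induction L generalizing j with
  | nil => exact ⟨1, one_mem _, by simp⟩
  | cons h L ih =>
    have hB : ⁅iterCommutator L b, h⁆ ∈ Subgroup.upperCentralSeries G (j + 1) :=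
      iterCommutator_mem_upperCentralSeries (h :: L) hb
    rw [List.length_cons, Nat.add_right_comm L.length 1 j] at hb
    obtain ⟨z, hz, hL⟩ := ih (j := j + 1) hb
    have hmod : QuotientGroup.mk' (Subgroup.upperCentralSeries G j)
          (⁅iterCommutator L a, h⁆ * ⁅iterCommutator L b, h⁆) =
        QuotientGroup.mk' (Subgroup.upperCentralSeries G j)
          ⁅iterCommutator L a * iterCommutator L b * z, h⁆ := by
      have hB' := mk'_mem_center_of_mem_upperCentralSeries_succ hB
      rw [map_commutatorElement] at hB'
      simp only [map_mul, map_commutatorElement]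
      exact (commutatorElement_mul_mul_of_mem_center
        (mk'_mem_center_of_mem_upperCentralSeries_succ hz) hB').symm
    obtain ⟨w, hw, hwq⟩ := (QuotientGroup.mk'_eq_mk' _).mp hmod
    exact ⟨w, hw, by rw [iterCommutator_cons, hL, ← hwq]; rfl⟩

end IterCommutator

section NoSmallSubgroups

variable {G : Type*} [Group G]

theorem eq_one_of_map_add_of_mapsTo_uIcc {U : Set G}
    (hU : ∀ H : Subgroup G, (H : Set G) ⊆ U → H = ⊥) {u : ℝ → G}
    (hu : ∀ s t, u (s + t) = u s * u t) {T : ℝ} (hT : T ≠ 0) (huT : u T = 1)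
    (hUT : MapsTo u (uIcc 0 T) U) (s : ℝ) : u s = 1 := by
  let f : Multiplicative ℝ →* G := MonoidHom.mk' (fun x => u x.toAdd) fun x y => hu _ _
  have hper : Function.Periodic u T := fun x => by rw [hu, huT, mul_one]
  have hrange : (f.range : Set G) ⊆ U := by
    rintro _ ⟨x, rfl⟩
    obtain ⟨y, hy, hxy⟩ : u x.toAdd ∈ u '' uIcc 0 (0 + T) := by
      rw [hper.image_uIcc hT]; exact mem_range_self _
    show u x.toAdd ∈ U
    rw [← hxy]; exact hUT (by simpa using hy)
  simpa [f] using
    (Subgroup.eq_bot_iff_forall _).mp (hU _ hrange) (u s) ⟨Multiplicative.ofAdd s, rfl⟩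

def HasNoSmallSubgroups (G : Type*) [Group G] [TopologicalSpace G] : Prop :=
  ∃ U ∈ 𝓝 (1 : G), ∀ H : Subgroup G, (H : Set G) ⊆ U → H = ⊥

variable [TopologicalSpace G]

theorem hasNoSmallSubgroups_of_eventually_expanding {a : ℝ} (ha : 1 < a) (N : G → ℝ)
    (hN : ∀ᶠ γ in 𝓝 (1 : G), N γ ≤ 1 ∧ (N γ ≤ 0 → γ = 1) ∧ a * N γ ≤ N (γ * γ)) :
    HasNoSmallSubgroups G := by
  refine ⟨_, hN, fun H hH => (Subgroup.eq_bot_iff_forall H).mpr fun γ hγ => ?_⟩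
  by_contra hγ1
  have hpos : 0 < N γ := lt_of_not_ge fun h => hγ1 ((hH hγ).2.1 h)
  have hgrowth : ∀ n : ℕ, a ^ n * N γ ≤ N (γ ^ 2 ^ n) := by
    intro n
    induction n with
    | zero => simp
    | succ n ih =>
      have hmem : γ ^ 2 ^ n ∈ H := H.pow_mem hγ _
      calc a ^ (n + 1) * N γ = a * (a ^ n * N γ) := by ring
        _ ≤ a * N (γ ^ 2 ^ n) := by gcongr
        _ ≤ N (γ ^ 2 ^ n * γ ^ 2 ^ n) := (hH hmem).2.2
        _ = N (γ ^ 2 ^ (n + 1)) := by rw [← pow_add, ← two_mul, pow_succ', mul_comm 2]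
  obtain ⟨n, hn⟩ := pow_unbounded_of_one_lt (N γ)⁻¹ ha
  have hbound := (hH (H.pow_mem hγ (2 ^ n))).1
  have := hgrowth n
  have : 1 < a ^ n * N γ := by rwa [inv_lt_iff_one_lt_mul₀ hpos] at hn
  linarith

variable [IsTopologicalGroup G]

theorem HasNoSmallSubgroups.t1Space (hG : HasNoSmallSubgroups G) : T1Space G := by
  obtain ⟨U, hU, hUH⟩ := hG
  refine IsTopologicalGroup.t1Space G (isClosed_of_closure_subset fun x hx => ?_)
  have hbot : (⊥ : Subgroup G).topologicalClosure = ⊥ := hUH _ <| by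
    rw [Subgroup.coe_topologicalClosure_bot, R0Space.closure_singleton]
    exact fun y hy => hy U hU
  rwa [← Subgroup.coe_topologicalClosure_bot, hbot] at hx

theorem HasNoSmallSubgroups.eq_one_of_continuous_family (hG : HasNoSmallSubgroups G)
    {X : Type*} [TopologicalSpace X] [PreconnectedSpace X] (Ψ : X → ℝ → G)
    (hΨ : Continuous fun p : X × ℝ => Ψ p.1 p.2) (hadd : ∀ x s t, Ψ x (s + t) = Ψ x s * Ψ x t)
    {T : ℝ} (hT : T ≠ 0) (hper : ∀ x, Ψ x T = 1) {x₀ : X} (hx₀ : ∀ t, Ψ x₀ t = 1) (x : X)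
    (t : ℝ) : Ψ x t = 1 := by
  have := hG.t1Space
  obtain ⟨U, hU, hUH⟩ := hG
  let W : Set X := {x | ∀ t, Ψ x t = 1}
  have hWclosed : IsClosed W := by
    simp only [W, ofPred_forall]
    exact isClosed_iInter fun t =>
      isClosed_eq (hΨ.comp (Continuous.prodMk_left t)) continuous_const
  have hWopen : IsOpen W := by
    refine isOpen_iff_mem_nhds.mpr fun x hx => ?_
    have hnear : ∀ᶠ y in 𝓝 x, ∀ s ∈ uIcc 0 T, Ψ y s ∈ U :=
      isCompact_uIcc.eventually_forall_of_forall_eventually fun s _ =>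
        hΨ.continuousAt.preimage_mem_nhds (by simpa [hx s] using hU)
    filter_upwards [hnear] with y hy
    exact eq_one_of_map_add_of_mapsTo_uIcc hUH (hadd y) hT (hper y) hy
  have hWuniv : W = univ := IsClopen.eq_univ ⟨hWclosed, hWopen⟩ ⟨x₀, hx₀⟩
  exact (hWuniv ▸ mem_univ x : x ∈ W) t

end NoSmallSubgroups

section Chart

variable {E H : Type*} [NormedAddCommGroup E] [NormedSpace ℝ E] [TopologicalSpace H]
  (I : ModelWithCorners ℝ E H) {G : Type*} [Monoid G] [TopologicalSpace G] [ChartedSpace H G]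
  {n : WithTop ℕ∞} [ContMDiffMul I n G]

theorem hasMFDerivAt_mul_self_one (hn : n ≠ 0) :
    HasMFDerivAt I I (fun g : G => g * g) 1 ((2 : ℝ) • ContinuousLinearMap.id ℝ E) := by
  have hmul : MDifferentiableAt (I.prod I) I (fun p : G × G => p.1 * p.2) (1, 1) :=
    (contMDiff_mul I n).mdifferentiableAt hn
  have hright : mfderiv I I (fun z : G => z * 1) 1 = ContinuousLinearMap.id ℝ E := by
    rw [show (fun z : G => z * 1) = id from funext mul_one]; exact mfderiv_id
  have hleft : mfderiv I I (fun z : G => 1 * z) 1 = ContinuousLinearMap.id ℝ E := by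
    rw [show (fun z : G => 1 * z) = id from funext one_mul]; exact mfderiv_id
  refine (hmul.hasMFDerivAt.comp (f := fun g : G => (g, g)) 1
    ((hasMFDerivAt_id 1).prodMk (hasMFDerivAt_id 1))).congr_mfderiv ?_
  ext v
  erw [ContinuousLinearMap.comp_apply, mfderiv_prod_eq_add_apply hmul, hright, hleft]
  rw [two_smul]; rfl

theorem eventually_norm_extChartAt_mul_self (hn : n ≠ 0) :
    ∀ᶠ γ in 𝓝 (1 : G), (3 / 2 : ℝ) * ‖extChartAt I (1 : G) γ - extChartAt I (1 : G) 1‖ ≤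
      ‖extChartAt I (1 : G) (γ * γ) - extChartAt I (1 : G) 1‖ := by
  have hD := (hasMFDerivAt_mul_self_one I (G := G) hn).2
  simp only [writtenInExtChartAt, mul_one] at hD
  have hc : Tendsto (extChartAt I (1 : G)) (𝓝 1) (𝓝[range I] (extChartAt I (1 : G) 1)) :=
    tendsto_nhdsWithin_iff.mpr ⟨continuousAt_extChartAt 1,
      Eventually.of_forall fun γ => by simp⟩
  filter_upwards [hc.eventually (hD.isLittleO.def (by norm_num : (0 : ℝ) < 1 / 2)),
    extChartAt_source_mem_nhds (I := I) (1 : G)] with γ hγ hsrc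
  simp only [Function.comp_apply, PartialEquiv.left_inv _ hsrc,
    PartialEquiv.left_inv _ (mem_extChartAt_source (I := I) (1 : G)), mul_one] at hγ
  rw [smul_apply, ContinuousLinearMap.id_apply] at hγ
  have hreverse := norm_sub_norm_le
    ((2 : ℝ) • (extChartAt I (1 : G) γ - extChartAt I (1 : G) 1))
    (extChartAt I (1 : G) (γ * γ) - extChartAt I (1 : G) 1)
  rw [norm_smul, Real.norm_two, norm_sub_rev ((2 : ℝ) • _)] at hreverse
  linarith

end Chart

theorem hasNoSmallSubgroups_of_contMDiffMul {E H : Type*} [NormedAddCommGroup E]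
    [NormedSpace ℝ E] [TopologicalSpace H] (I : ModelWithCorners ℝ E H) {G : Type*} [Group G]
    [TopologicalSpace G] [ChartedSpace H G] {n : WithTop ℕ∞} [ContMDiffMul I n G] (hn : n ≠ 0) :
    HasNoSmallSubgroups G := by
  refine hasNoSmallSubgroups_of_eventually_expanding (a := 3 / 2) (by norm_num)
    (fun γ => ‖extChartAt I (1 : G) γ - extChartAt I (1 : G) 1‖) ?_
  filter_upwards [(continuousAt_extChartAt (I := I) (1 : G)).eventually
    (Metric.closedBall_mem_nhds _ one_pos), extChartAt_source_mem_nhds (I := I) (1 : G),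
    eventually_norm_extChartAt_mul_self I hn] with γ hsmall hsrc hexpand
  refine ⟨by simpa [dist_eq_norm] using hsmall, fun h0 => ?_, hexpand⟩
  exact (extChartAt I (1 : G)).injOn hsrc (mem_extChartAt_source 1)
    (sub_eq_zero.mp (norm_le_zero_iff.mp h0))

theorem Continuous.iterCommutator {X G : Type*} [TopologicalSpace X] [Group G]
    [TopologicalSpace G] [IsTopologicalGroup G] (L : List G) {f : X → G} (hf : Continuous f) :
    Continuous fun x => iterCommutator L (f x) := by
  induction L with
  | nil => simpa using hf
  | cons g L ih =>
    simp only [iterCommutator_cons, commutatorElement_def]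
    fun_prop

section Nilpotent

variable {G : Type*} [Group G] [TopologicalSpace G] [IsTopologicalGroup G] [ConnectedSpace G]
  {φ : ℝ → G} {T : ℝ}

theorem HasNoSmallSubgroups.mem_upperCentralSeries_of_mem_succ (hG : HasNoSmallSubgroups G)
    (hφcont : Continuous φ) (hφhom : ∀ s t, φ (s + t) = φ s * φ t) (hT : T ≠ 0)
    (hcentral : φ T ∈ Subgroup.center G) {k : ℕ}
    (hk : ∀ t, φ t ∈ Subgroup.upperCentralSeries G (k + 2)) (t : ℝ) :
    φ t ∈ Subgroup.upperCentralSeries G (k + 1) := by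
  rw [mem_upperCentralSeries_iff_forall_iterCommutator_eq_one]
  rintro (_ | ⟨g, L⟩) hL
  · simp at hL
  have hLk : L.length = k := by simpa using hL
  have hTk : φ T ∈ Subgroup.upperCentralSeries G (k + 1) :=
    Subgroup.upperCentralSeries_mono G (Nat.le_add_left 1 k)
      (by rwa [Subgroup.upperCentralSeries_one])
  refine hG.eq_one_of_continuous_family (fun x t => iterCommutator (x :: L) (φ t)) ?_ ?_ hT
    (fun x => mem_upperCentralSeries_iff_forall_iterCommutator_eq_one.mp hTk (x :: L)
      (by simp [hLk]))
    (x₀ := 1) (fun t => commutatorElement_one_right _) g t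
  · have := (Continuous.iterCommutator L hφcont).comp (continuous_snd (X := G))
    simp only [iterCommutator_cons, commutatorElement_def]
    fun_prop
  · intro x s t
    obtain ⟨z, hz, hmul⟩ := exists_iterCommutator_mul (x :: L) (j := 0) (φ s) (b := φ t)
      (by simpa [hLk] using hk t)
    rw [hφhom, hmul, Subgroup.mem_bot.mp hz, mul_one]

theorem HasNoSmallSubgroups.mem_center_of_mem_center [Group.IsNilpotent G]
    (hG : HasNoSmallSubgroups G) (hφcont : Continuous φ) (hφhom : ∀ s t, φ (s + t) = φ s * φ t)
    (hT : T ≠ 0) (hcentral : φ T ∈ Subgroup.center G) (t : ℝ) : φ t ∈ Subgroup.center G := by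
  obtain ⟨n, hn⟩ := Group.IsNilpotent.nilpotent G
  have htop : ∀ t, φ t ∈ Subgroup.upperCentralSeries G (n + 1) := fun t =>
    Subgroup.upperCentralSeries_mono G n.le_succ (hn ▸ Subgroup.mem_top _)
  rw [← Subgroup.upperCentralSeries_one]
  exact Nat.decreasingInduction
    (motive := fun k _ => ∀ t, φ t ∈ Subgroup.upperCentralSeries G (k + 1))
    (fun _ _ ih => hG.mem_upperCentralSeries_of_mem_succ hφcont hφhom hT hcentral ih) htop
    n.zero_le t

end Nilpotent

/-- In a connected nilpotent Lie group, a one-parameter subgroup with one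
nontrivial central value is entirely central. -/
theorem oneParameter_central_of_central_value
    {E M : Type*} [NormedAddCommGroup E] [NormedSpace ℝ E] [TopologicalSpace M]
    (I : ModelWithCorners ℝ E M)
    (G : Type*) [Group G] [TopologicalSpace G] [IsTopologicalGroup G]
    [ChartedSpace M G] [LieGroup I (⊤ : ℕ∞) G] [ConnectedSpace G] [Group.IsNilpotent G]
    (φ : ℝ → G) (hφcont : Continuous φ) (hφhom : ∀ s t : ℝ, φ (s + t) = φ s * φ t)
    (t₀ : ℝ) (ht₀ : t₀ ≠ 0) (hcentral : φ t₀ ∈ Subgroup.center G) :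
    ∀ t : ℝ, φ t ∈ Subgroup.center G :=
  (hasNoSmallSubgroups_of_contMDiffMul I (n := (⊤ : ℕ∞)) (by simp)).mem_center_of_mem_center
    hφcont hφhom ht₀ hcentral
end

section
/- Let 0 → A → E → G → 1 be an exact sequence of second countable locally compact groups with A discrete in E, and let σ be a Borel section of p: E → G. Then there exists a Borel subset X of E that is relatively compact, symmetric (X = X⁻¹), of positive Haar measure, and such that σ(p(X)) is relatively compact. -/
/-!
Exhaust `E` by the compact sets `Kₙ` of a compact covering. For an open relatively compact
neighbourhood `U` of `1`, the points `e ∈ U ∩ U⁻¹` with `σ (p e) ∈ Kₙ` and `σ (p e⁻¹) ∈ Kₙ` exhaust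
`U ∩ U⁻¹` as `n` grows, so by countable additivity one of these sets has positive Haar measure.
Writing `V = U ∩ (σ ∘ p)⁻¹ (closure Kₙ)`, the set `X = V ∩ V⁻¹` is then symmetric, Borel, contained
in `U`, and `σ (p X) ⊆ closure Kₙ`. The closure is taken because `E` need not be Hausdorff: it
makes the set Borel and stays compact since topological groups are regular.
-/

open MeasureTheory Set

section CompactCovering

variable {α β : Type*} [MeasurableSpace α] [TopologicalSpace β] [SigmaCompactSpace β]

theorem eventually_mem_compactCovering (y : β) : ∀ᶠ n in Filter.atTop, y ∈ compactCovering β n :=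
  let ⟨n, hn⟩ := exists_mem_compactCovering y
  Filter.eventually_atTop.2 ⟨n, fun _ hm => compactCovering_subset β hm hn⟩

theorem exists_isCompact_measure_inter_preimage_inter_preimage_pos {μ : Measure α} {s : Set α}
    (hs : μ s ≠ 0) (f g : α → β) :
    ∃ K : Set β, IsCompact K ∧ 0 < μ (s ∩ f ⁻¹' K ∩ g ⁻¹' K) := by
  have hcover : s ⊆ ⋃ n, s ∩ f ⁻¹' compactCovering β n ∩ g ⁻¹' compactCovering β n := by
    intro x hx
    obtain ⟨n, hfn, hgn⟩ :=
      ((eventually_mem_compactCovering (f x)).and (eventually_mem_compactCovering (g x))).exists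
    exact mem_iUnion.2 ⟨n, ⟨hx, hfn⟩, hgn⟩
  obtain ⟨n, hn⟩ := exists_measure_pos_of_not_measure_iUnion_null
    fun h => hs (measure_mono_null hcover h)
  exact ⟨_, isCompact_compactCovering β n, hn⟩

theorem exists_isCompact_measure_inter_preimage_inter_inv_pos [InvolutiveInv α]
    {μ : Measure α} {s : Set α} (hs : μ (s ∩ s⁻¹) ≠ 0) (f : α → β) :
    ∃ K : Set β, IsCompact K ∧ 0 < μ ((s ∩ f ⁻¹' K) ∩ (s ∩ f ⁻¹' K)⁻¹) := by
  obtain ⟨K, hK, hpos⟩ :=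
    exists_isCompact_measure_inter_preimage_inter_preimage_pos hs f (f ∘ Inv.inv)
  refine ⟨K, hK, hpos.trans_eq (congrArg μ ?_)⟩
  ext x
  simp only [mem_inter_iff, mem_inv, mem_preimage, Function.comp_apply]
  tauto

end CompactCovering

theorem exists_isOpen_one_mem_isCompact_closure (E : Type*) [Group E] [TopologicalSpace E]
    [IsTopologicalGroup E] [LocallyCompactSpace E] :
    ∃ U : Set E, IsOpen U ∧ (1 : E) ∈ U ∧ IsCompact (closure U) :=
  let ⟨K, hK, hK1⟩ := exists_compact_mem_nhds (1 : E)
  ⟨interior K, isOpen_interior, mem_interior_iff_mem_nhds.2 hK1,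
    hK.closure_of_subset interior_subset⟩

theorem exists_good_borel_set_for_section_general
    {E G : Type*} [Group E] [TopologicalSpace E] [IsTopologicalGroup E]
    [LocallyCompactSpace E] [SecondCountableTopology E]
    [Group G] [TopologicalSpace G]
    [MeasurableSpace E] [BorelSpace E] [MeasurableSpace G] [BorelSpace G]
    (p : E →* G) (hpcont : Continuous p)
    (μ : Measure E) [μ.IsHaarMeasure]
    (σ : G → E) (hσmeas : Measurable σ) :
    ∃ X : Set E, MeasurableSet X ∧ IsCompact (closure X) ∧ 0 < μ X ∧ X = X⁻¹ ∧
      IsCompact (closure (σ '' (p '' X))) := by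
  obtain ⟨U, hUo, hU1, hUc⟩ := exists_isOpen_one_mem_isCompact_closure E
  have hUU : μ (U ∩ U⁻¹) ≠ 0 :=
    ((hUo.inter hUo.inv).measure_pos μ ⟨1, hU1, by simpa using hU1⟩).ne'
  obtain ⟨K, hK, hpos⟩ := exists_isCompact_measure_inter_preimage_inter_inv_pos hUU (σ ∘ p)
  set V := U ∩ (σ ∘ p) ⁻¹' closure K
  have hV : MeasurableSet V :=
    hUo.measurableSet.inter ((hσmeas.comp hpcont.measurable) isClosed_closure.measurableSet)
  have hKV : U ∩ (σ ∘ p) ⁻¹' K ⊆ V := inter_subset_inter_right _ (preimage_mono subset_closure)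
  refine ⟨V ∩ V⁻¹, hV.inter hV.inv, ?_, ?_, ?_, ?_⟩
  · exact hUc.of_isClosed_subset isClosed_closure
      (closure_mono (inter_subset_left.trans inter_subset_left))
  · exact hpos.trans_le (measure_mono (inter_subset_inter hKV (inv_subset_inv.2 hKV)))
  · rw [inter_inv (s := V), inv_inv, inter_comm]
  · refine hK.closure.closure_of_subset ?_
    rintro _ ⟨_, ⟨e, he, rfl⟩, rfl⟩
    exact he.1.2

/-- Let `0 → A → E → G → 1` be an exact sequence of second countable locally
compact groups with `A = ker p` discrete in `E`, and let `σ` be a Borel section of `p : E → G`.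
Then there is a Borel subset `X` of `E` which is relatively compact, symmetric, of positive Haar
measure, and such that `σ(p(X))` is relatively compact. -/
theorem exists_good_borel_set_for_section
    {E G : Type*} [Group E] [TopologicalSpace E] [IsTopologicalGroup E]
    [LocallyCompactSpace E] [SecondCountableTopology E]
    [Group G] [TopologicalSpace G] [IsTopologicalGroup G]
    [LocallyCompactSpace G] [SecondCountableTopology G]
    [MeasurableSpace E] [BorelSpace E] [MeasurableSpace G] [BorelSpace G]
    (p : E →* G) (hpcont : Continuous p) (hpopen : IsOpenMap p)
    (hpsurj : Function.Surjective p) [DiscreteTopology ↥p.ker]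
    (μ : Measure E) [μ.IsHaarMeasure]
    (σ : G → E) (hσmeas : Measurable σ) (hσsec : ∀ g : G, p (σ g) = g) :
    ∃ X : Set E, MeasurableSet X ∧ IsCompact (closure X) ∧ 0 < μ X ∧ X = X⁻¹ ∧
      IsCompact (closure (σ '' (p '' X))) :=
  exists_good_borel_set_for_section_general p hpcont μ σ hσmeas
end

section
/- Let p: X → Y and q: Y → Z be surjective group homomorphisms with central kernels, σ a section of p and τ a section of q whose associated 2-cocycles c_σ and c_τ have finite range. If σ(ker q) is central in X, then the cocycle c_{στ} associated to the section σ∘τ of q∘p has finite range. -/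
/-!
Write `c_σ(y₁, y₂) = σ y₁ σ y₂ σ(y₁ y₂)⁻¹` and `u = c_τ(z₁, z₂)`, `w = τ(z₁ z₂)`, so that
`u w = τ z₁ τ z₂`. Then `c_{σ∘τ}(z₁, z₂) = c_σ(τ z₁, τ z₂) · c_σ(u, w)⁻¹ · σ u`, a product of
values of three finite-range functions.
-/

open Pointwise

def sectionCocycle {X Y : Type*} [Group X] [Mul Y] (σ : Y → X) (yy : Y × Y) : X :=
  σ yy.1 * σ yy.2 * (σ (yy.1 * yy.2))⁻¹

section

variable {X Y Z : Type*} [Group X] [Group Y]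

theorem mul_mul_inv_eq_sectionCocycle (σ : Y → X) (y₁ y₂ w : Y) :
    σ y₁ * σ y₂ * (σ w)⁻¹ =
      sectionCocycle σ (y₁, y₂) * (sectionCocycle σ (y₁ * y₂ * w⁻¹, w))⁻¹ *
        σ (y₁ * y₂ * w⁻¹) := by
  simp only [sectionCocycle]
  group

theorem sectionCocycle_comp [Mul Z] (σ : Y → X) (τ : Z → Y) (z₁ z₂ : Z) :
    sectionCocycle (σ ∘ τ) (z₁, z₂) =
      sectionCocycle σ (τ z₁, τ z₂) *
        (sectionCocycle σ (sectionCocycle τ (z₁, z₂), τ (z₁ * z₂)))⁻¹ *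
        σ (sectionCocycle τ (z₁, z₂)) :=
  mul_mul_inv_eq_sectionCocycle σ (τ z₁) (τ z₂) (τ (z₁ * z₂))

theorem finite_range_sectionCocycle_comp [Mul Z] (σ : Y → X) (τ : Z → Y)
    (hσ : (Set.range (sectionCocycle σ)).Finite) (hτ : (Set.range (sectionCocycle τ)).Finite) :
    (Set.range (sectionCocycle (σ ∘ τ))).Finite := by
  refine ((hσ.mul hσ.inv).mul (hτ.image σ)).subset ?_
  rintro _ ⟨⟨z₁, z₂⟩, rfl⟩
  rw [sectionCocycle_comp]
  exact Set.mul_mem_mul (Set.mul_mem_mul (Set.mem_range_self _)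
    (Set.inv_mem_inv.mpr (Set.mem_range_self _))) (Set.mem_image_of_mem σ (Set.mem_range_self _))

end

theorem finite_range_cocycle_of_composition_general
    {X Y Z : Type*} [Group X] [Group Y] [Group Z]
    (σ : Y → X)
    (τ : Z → Y)
    (hcσ : (Set.range fun yy : Y × Y => σ yy.1 * σ yy.2 * (σ (yy.1 * yy.2))⁻¹).Finite)
    (hcτ : (Set.range fun zz : Z × Z => τ zz.1 * τ zz.2 * (τ (zz.1 * zz.2))⁻¹).Finite) :
    (Set.range fun zz : Z × Z =>
      σ (τ zz.1) * σ (τ zz.2) * (σ (τ (zz.1 * zz.2)))⁻¹).Finite :=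
  finite_range_sectionCocycle_comp σ τ hcσ hcτ

/-- Let `p : X → Y` and `q : Y → Z` be surjective homomorphisms with central
kernels, with sections `σ`, `τ` whose cocycles have finite range.  If `σ(ker q)` is central in
`X`, then the cocycle of the section `σ ∘ τ` of `q ∘ p` has finite range. -/
theorem finite_range_cocycle_of_composition
    {X Y Z : Type*} [Group X] [Group Y] [Group Z]
    (p : X →* Y) (hp : Function.Surjective p) (hpker : p.ker ≤ Subgroup.center X)
    (q : Y →* Z) (hq : Function.Surjective q) (hqker : q.ker ≤ Subgroup.center Y)
    (σ : Y → X) (hσ : ∀ y, p (σ y) = y)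
    (τ : Z → Y) (hτ : ∀ z, q (τ z) = z)
    (hcσ : (Set.range fun yy : Y × Y => σ yy.1 * σ yy.2 * (σ (yy.1 * yy.2))⁻¹).Finite)
    (hcτ : (Set.range fun zz : Z × Z => τ zz.1 * τ zz.2 * (τ (zz.1 * zz.2))⁻¹).Finite)
    (hcentral : ∀ y ∈ q.ker, σ y ∈ Subgroup.center X) :
    (Set.range fun zz : Z × Z =>
      σ (τ zz.1) * σ (τ zz.2) * (σ (τ (zz.1 * zz.2)))⁻¹).Finite :=
  finite_range_cocycle_of_composition_general σ τ hcσ hcτ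
end
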